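/- arXiv:2401.11384 — 2 statements merged into one kernel-verified Lean document; each statement's English description precedes it below -/
import Mathlib

section
/- For α ∈ (1/2, 1) and a symmetric α-stable random variable L₁ on ℝ (characteristic function E[e^{iξL₁}] = e^{-|ξ|^α}), there exist constants c > 0 and ϱ > 0 such that c = α · E[sgn(c + ϱL₁)·|c + ϱL₁|^{1-α}]. -/
/-!
Write `φ u = sign u * |u| ^ (1 - α)`. Since `φ (ϱ * u) = ϱ ^ (1 - α) * φ u` for `ϱ > 0`, the choice
`ϱ = c / t` gives `E φ(c + ϱ L) = ϱ ^ (1 - α) * E φ(t + L)`, and the equation becomes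
`c ^ α = α * t ^ (α - 1) * E φ(t + L)`, which has a solution `c > 0` as soon as `E φ(t + L) > 0`.
By dominated convergence `E φ(t + L) / t ^ (1 - α) → 1` as `t → ∞`, so such a `t` exists.

The domination needs `E |L| ^ p < ∞` for `p = 1 - α < α`. It comes from the scaling identity
`∫₀^∞ (1 - cos (ξ x)) ξ^(-1-p) dξ = |x| ^ p * ∫₀^∞ (1 - cos u) u^(-1-p) du`, which by Tonelli and
the characteristic function gives
`E |L| ^ p * ∫₀^∞ (1 - cos u) u^(-1-p) du = ∫₀^∞ (1 - e^(-ξ^α)) ξ^(-1-p) dξ < ∞`.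
-/

open MeasureTheory Real Set Filter
open scoped ENNReal Topology

lemma lintegral_Ioi_ofReal_ne_top_of_le_rpow {F : ℝ → ℝ} {a b C : ℝ} (ha : -1 < a) (hb : b < -1)
    (h_zero : ∀ u, 0 < u → u ≤ 1 → F u ≤ u ^ a) (h_infty : ∀ u, 1 < u → F u ≤ C * u ^ b) :
    ∫⁻ u in Ioi (0:ℝ), ENNReal.ofReal (F u) ≠ ∞ := by
  have h₁ : IntegrableOn (fun u : ℝ => u ^ a) (Ioc 0 1) :=
    (integrableOn_Ioc_iff_integrableOn_Ioo).2
      ((intervalIntegral.integrableOn_Ioo_rpow_iff zero_lt_one).2 ha)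
  have h₂ : IntegrableOn (fun u : ℝ => C * u ^ b) (Ioi 1) :=
    (integrableOn_Ioi_rpow_of_lt hb zero_lt_one).const_mul C
  rw [← Ioc_union_Ioi_eq_Ioi zero_le_one,
    lintegral_union measurableSet_Ioi (Ioc_disjoint_Ioi le_rfl)]
  refine ENNReal.add_ne_top.2 ⟨ne_top_of_le_ne_top h₁.2.ne ?_, ne_top_of_le_ne_top h₂.2.ne ?_⟩
  · refine setLIntegral_mono' measurableSet_Ioc fun u hu => ?_
    exact (ENNReal.ofReal_le_ofReal (h_zero u hu.1 hu.2)).trans (ofReal_le_enorm _)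
  · refine setLIntegral_mono' measurableSet_Ioi fun u hu => ?_
    exact (ENNReal.ofReal_le_ofReal (h_infty u hu)).trans (ofReal_le_enorm _)

lemma lintegral_Ioi_comp_const_mul {f : ℝ → ℝ≥0∞} (hf : Measurable f) {c : ℝ} (hc : 0 < c) :
    ∫⁻ x in Ioi 0, f (c * x) = ENNReal.ofReal c⁻¹ * ∫⁻ u in Ioi 0, f u := by
  have hm : Measurable (c * · : ℝ → ℝ) := measurable_const_mul c
  have hmap : Measure.map (c * ·) (volume.restrict (Ioi (0:ℝ)))
      = ENNReal.ofReal c⁻¹ • volume.restrict (Ioi 0) := by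
    conv_lhs => rw [← zero_div c, ← preimage_const_mul_Ioi₀ 0 hc]
    rw [← Measure.restrict_map hm measurableSet_Ioi, Real.map_volume_mul_left hc.ne',
      Measure.restrict_smul, abs_of_pos (inv_pos.2 hc)]
  rw [← lintegral_map hf hm, hmap, lintegral_smul_measure, smul_eq_mul]

noncomputable def oneSubCosRpowIntegral (p : ℝ) : ℝ≥0∞ :=
  ∫⁻ u in Ioi 0, ENNReal.ofReal ((1 - cos u) / u ^ (1 + p))

lemma measurable_ofReal_one_sub_cos_div_rpow (p : ℝ) :
    Measurable fun u : ℝ => ENNReal.ofReal ((1 - cos u) / u ^ (1 + p)) := by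
  fun_prop

lemma oneSubCosRpowIntegral_pos (p : ℝ) : 0 < oneSubCosRpowIntegral p := by
  have h_pos : ∀ u ∈ Ioo (2:ℝ) 3, 0 < ENNReal.ofReal ((1 - cos u) / u ^ (1 + p)) := by
    intro u hu
    have : cos u ≤ 0 := cos_nonpos_of_pi_div_two_le_of_le (by linarith [pi_le_four, hu.1])
      (by linarith [pi_gt_three, hu.2])
    exact ENNReal.ofReal_pos.2 (div_pos (by linarith) (rpow_pos_of_pos (by linarith [hu.1]) _))
  refine (setLIntegral_pos_iff (measurable_ofReal_one_sub_cos_div_rpow p)).2 ?_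
  refine lt_of_lt_of_le (by norm_num) (measure_mono fun u hu => ⟨(h_pos u hu).ne', ?_⟩)
  exact lt_trans two_pos hu.1

lemma lintegral_Ioi_one_sub_cos_mul_div_rpow {p : ℝ} (hp : 0 < p) (x : ℝ) :
    ∫⁻ ξ in Ioi 0, ENNReal.ofReal ((1 - cos (ξ * x)) / ξ ^ (1 + p))
      = ENNReal.ofReal (|x| ^ p) * oneSubCosRpowIntegral p := by
  rcases eq_or_ne x 0 with rfl | hx
  · simp [zero_rpow hp.ne']
  have hx' : 0 < |x| := abs_pos.2 hx
  have h_subst : ∀ ξ ∈ Ioi (0:ℝ), ENNReal.ofReal ((1 - cos (ξ * x)) / ξ ^ (1 + p))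
      = ENNReal.ofReal (|x| ^ (1 + p)) *
        ENNReal.ofReal ((1 - cos (|x| * ξ)) / (|x| * ξ) ^ (1 + p)) := by
    intro ξ hξ
    have hξ' : (0:ℝ) < ξ := hξ
    rw [← ENNReal.ofReal_mul (by positivity), mul_rpow hx'.le hξ'.le, ← cos_abs (ξ * x),
      abs_mul, abs_of_pos hξ', mul_comm ξ]
    congr 1
    field_simp
  rw [setLIntegral_congr_fun measurableSet_Ioi h_subst,
    lintegral_const_mul' _ _ ENNReal.ofReal_ne_top,
    lintegral_Ioi_comp_const_mul (measurable_ofReal_one_sub_cos_div_rpow p) hx',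
    ← mul_assoc, ← ENNReal.ofReal_mul (by positivity), oneSubCosRpowIntegral, rpow_add hx',
    rpow_one]
  congr 2
  field_simp

lemma Real.measurable_sign : Measurable Real.sign :=
  Measurable.ite measurableSet_Iio measurable_const
    (Measurable.ite measurableSet_Ioi measurable_const measurable_const)

noncomputable def signedRpow (p u : ℝ) : ℝ := sign u * |u| ^ p

lemma measurable_signedRpow (p : ℝ) : Measurable (signedRpow p) :=
  Real.measurable_sign.mul (measurable_abs.pow_const p)

lemma abs_signedRpow_le (p u : ℝ) : |signedRpow p u| ≤ |u| ^ p := by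
  rw [signedRpow, abs_mul, abs_of_nonneg (rpow_nonneg (abs_nonneg u) p)]
  rcases sign_apply_eq u with h | h | h <;> simp [h, rpow_nonneg (abs_nonneg u) p]

lemma signedRpow_of_pos {u : ℝ} (hu : 0 < u) (p : ℝ) : signedRpow p u = u ^ p := by
  rw [signedRpow, sign_of_pos hu, abs_of_pos hu, one_mul]

lemma signedRpow_mul_of_pos {r : ℝ} (hr : 0 < r) (p u : ℝ) :
    signedRpow p (r * u) = r ^ p * signedRpow p u := by
  rcases lt_trichotomy u 0 with hu | rfl | hu
  · simp only [signedRpow, sign_of_neg hu, sign_of_neg (mul_neg_of_pos_of_neg hr hu), abs_mul,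
      abs_of_pos hr, mul_rpow hr.le (abs_nonneg u)]
    ring
  · simp [signedRpow]
  · rw [signedRpow_of_pos (mul_pos hr hu), signedRpow_of_pos hu, mul_rpow hr.le hu.le]

section
variable {Ω : Type*} [MeasurableSpace Ω] {P : Measure Ω} [IsProbabilityMeasure P] {L : Ω → ℝ}
  {p : ℝ}

lemma integral_cos_mul_eq_re_integral_cexp (hL : Measurable L) (ξ : ℝ) :
    ∫ ω, cos (ξ * L ω) ∂P = (∫ ω, Complex.exp (((ξ * L ω : ℝ) : ℂ) * Complex.I) ∂P).re := by
  have hint : Integrable (fun ω => Complex.exp (((ξ * L ω : ℝ) : ℂ) * Complex.I)) P :=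
    .of_bound (by fun_prop) 1 (.of_forall fun ω => by rw [Complex.norm_exp_ofReal_mul_I])
  simpa only [RCLike.re_to_complex, Complex.exp_ofReal_mul_I_re] using integral_re hint

lemma lintegral_abs_rpow_mul_oneSubCosRpowIntegral (hL : Measurable L) (hp : 0 < p) :
    (∫⁻ ω, ENNReal.ofReal (|L ω| ^ p) ∂P) * oneSubCosRpowIntegral p
      = ∫⁻ ξ in Ioi 0, ENNReal.ofReal ((1 - ∫ ω, cos (ξ * L ω) ∂P) / ξ ^ (1 + p)) := by
  have h_meas : Measurable (Function.uncurry fun (ω : Ω) (ξ : ℝ) =>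
      ENNReal.ofReal ((1 - cos (ξ * L ω)) / ξ ^ (1 + p))) := by
    fun_prop
  calc (∫⁻ ω, ENNReal.ofReal (|L ω| ^ p) ∂P) * oneSubCosRpowIntegral p
      = ∫⁻ ω, (∫⁻ ξ in Ioi 0, ENNReal.ofReal ((1 - cos (ξ * L ω)) / ξ ^ (1 + p))) ∂P := by
        rw [← lintegral_mul_const _ (by fun_prop)]
        simp_rw [lintegral_Ioi_one_sub_cos_mul_div_rpow hp]
    _ = ∫⁻ ξ in Ioi 0, ∫⁻ ω, ENNReal.ofReal ((1 - cos (ξ * L ω)) / ξ ^ (1 + p)) ∂P :=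
        lintegral_lintegral_swap h_meas.aemeasurable
    _ = _ := by
        refine setLIntegral_congr_fun measurableSet_Ioi fun ξ (hξ : 0 < ξ) => ?_
        have h_cos : Integrable (fun ω => cos (ξ * L ω)) P :=
          .of_bound (by fun_prop) 1 (.of_forall fun ω => by simpa using abs_cos_le_one _)
        have h_nonneg : ∀ ω, 0 ≤ (1 - cos (ξ * L ω)) / ξ ^ (1 + p) := fun ω =>
          div_nonneg (by linarith [cos_le_one (ξ * L ω)]) (rpow_nonneg hξ.le _)
        have h_int : Integrable (fun ω => (1 - cos (ξ * L ω)) / ξ ^ (1 + p)) P :=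
          ((integrable_const 1).sub h_cos).div_const _
        rw [← ofReal_integral_eq_lintegral_ofReal h_int (.of_forall h_nonneg), integral_div,
          integral_sub (integrable_const 1) h_cos, integral_const, probReal_univ, one_smul]

lemma integrable_abs_rpow_of_integral_cos_mul_eq {α : ℝ} (hL : Measurable L) (hp : 0 < p)
    (hpα : p < α) (hcos : ∀ ξ, ∫ ω, cos (ξ * L ω) ∂P = exp (-|ξ| ^ α)) :
    Integrable (fun ω => |L ω| ^ p) P := by
  have h_finite : (∫⁻ ω, ENNReal.ofReal (|L ω| ^ p) ∂P) * oneSubCosRpowIntegral p ≠ ∞ := by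
    simp_rw [lintegral_abs_rpow_mul_oneSubCosRpowIntegral hL hp, hcos]
    refine lintegral_Ioi_ofReal_ne_top_of_le_rpow (a := α - (1 + p)) (b := -(1 + p)) (C := 1)
      (by linarith) (by linarith) (fun u hu _ => ?_) (fun u hu => ?_)
    · rw [abs_of_pos hu, rpow_sub hu]
      gcongr
      linarith [add_one_le_exp (-u ^ α)]
    · rw [rpow_neg (by linarith), ← div_eq_mul_inv]
      gcongr
      linarith [exp_pos (-|u| ^ α)]
  refine (lintegral_ofReal_ne_top_iff_integrable (hL.abs.pow_const p).aestronglyMeasurable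
    (.of_forall fun ω => by positivity)).1 ?_
  exact fun h => h_finite (by rw [h, ENNReal.top_mul (oneSubCosRpowIntegral_pos p).ne'])

lemma tendsto_integral_signedRpow_natCast_add_div (hL : Measurable L) (hp₀ : 0 ≤ p)
    (hp₁ : p ≤ 1) (h_moment : Integrable (fun ω => |L ω| ^ p) P) :
    Tendsto (fun n : ℕ => ∫ ω, signedRpow p (n + L ω) / (n : ℝ) ^ p ∂P) atTop (𝓝 1) := by
  have h_bound : ∀ᶠ n : ℕ in atTop, ∀ᵐ ω ∂P,
      ‖signedRpow p (n + L ω) / (n : ℝ) ^ p‖ ≤ 1 + |L ω| ^ p := by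
    filter_upwards [eventually_ge_atTop 1] with n hn
    refine .of_forall fun ω => ?_
    have hn' : (1 : ℝ) ≤ n := Nat.one_le_cast.2 hn
    have hnp : 1 ≤ (n : ℝ) ^ p := one_le_rpow hn' hp₀
    rw [norm_div, norm_of_nonneg (rpow_nonneg n.cast_nonneg p), div_le_iff₀ (by linarith)]
    calc ‖signedRpow p (n + L ω)‖ ≤ ((n : ℝ) + |L ω|) ^ p := by
          refine (abs_signedRpow_le p _).trans ?_
          gcongr
          exact (abs_add_le _ _).trans_eq (by rw [Nat.abs_cast])
      _ ≤ (n : ℝ) ^ p + |L ω| ^ p :=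
          rpow_add_le_add_rpow (Nat.cast_nonneg n) (abs_nonneg _) hp₀ hp₁
      _ ≤ (1 + |L ω| ^ p) * (n : ℝ) ^ p := by
          nlinarith [rpow_nonneg (abs_nonneg (L ω)) p]
  have h_lim : ∀ ω, Tendsto (fun n : ℕ => signedRpow p (n + L ω) / (n : ℝ) ^ p) atTop (𝓝 1) := by
    intro ω
    have h : Tendsto (fun n : ℕ => (1 + L ω / n) ^ p) atTop (𝓝 1) := by
      simpa using ((tendsto_const_div_atTop_nhds_zero_nat (L ω)).const_add 1).rpow_const
        (Or.inr hp₀)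
    refine h.congr' ?_
    filter_upwards [(tendsto_natCast_atTop_atTop (R := ℝ)).eventually_gt_atTop |L ω|] with n hn
    have hn₀ : (0 : ℝ) < n := (abs_nonneg _).trans_lt hn
    have h_pos : 0 < (n : ℝ) + L ω := by linarith [neg_abs_le (L ω)]
    rw [signedRpow_of_pos h_pos, ← div_rpow h_pos.le hn₀.le, add_div, div_self hn₀.ne']
  simpa using tendsto_integral_filter_of_dominated_convergence _
    (.of_forall fun n => (((measurable_signedRpow p).comp
      (measurable_const.add hL)).div_const _).aestronglyMeasurable)
    h_bound ((integrable_const 1).add h_moment) (.of_forall h_lim)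

lemma exists_integral_signedRpow_const_add_pos (hL : Measurable L) (hp₀ : 0 ≤ p) (hp₁ : p ≤ 1)
    (h_moment : Integrable (fun ω => |L ω| ^ p) P) :
    ∃ t > 0, 0 < ∫ ω, signedRpow p (t + L ω) ∂P := by
  obtain ⟨n, hn, h_pos⟩ := ((eventually_gt_atTop 0).and
    ((tendsto_integral_signedRpow_natCast_add_div hL hp₀ hp₁ h_moment).eventually
      (eventually_gt_nhds one_pos))).exists
  have hn' : (0 : ℝ) < n := Nat.cast_pos.2 hn
  rw [integral_div, div_pos_iff_of_pos_right (rpow_pos_of_pos hn' p)] at h_pos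
  exact ⟨n, hn', h_pos⟩

end

/-- For `α ∈ (1/2, 1)` and a symmetric `α`-stable random variable `L₁` on `ℝ`
(characteristic function `E[e^{iξL₁}] = e^{-|ξ|^α}`), there exist constants `c > 0` and
`ϱ > 0` such that `c = α · E[sgn(c + ϱL₁)·|c + ϱL₁|^{1-α}]`. -/
theorem stmt0 {Ω : Type*} [MeasurableSpace Ω] (P : Measure Ω) [IsProbabilityMeasure P]
    (α : ℝ) (hα : α ∈ Set.Ioo (1/2 : ℝ) 1) (L : Ω → ℝ) (hL : Measurable L)
    (hchar : ∀ ξ : ℝ,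
      ∫ ω, Complex.exp (((ξ * L ω : ℝ) : ℂ) * Complex.I) ∂P
        = Complex.exp (-((|ξ| ^ α : ℝ) : ℂ))) :
    ∃ c > (0:ℝ), ∃ ϱ > (0:ℝ),
      c = α * ∫ ω, Real.sign (c + ϱ * L ω) * |c + ϱ * L ω| ^ (1 - α) ∂P := by
  obtain ⟨hα₁, hα₂⟩ := hα
  have hα₀ : 0 < α := by linarith
  have h_moment : Integrable (fun ω => |L ω| ^ (1 - α)) P :=
    integrable_abs_rpow_of_integral_cos_mul_eq hL (by linarith) (by linarith)
      fun ξ => by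
        rw [integral_cos_mul_eq_re_integral_cexp hL, hchar, ← Complex.ofReal_neg,
          Complex.exp_ofReal_re]
  obtain ⟨t, ht, hI⟩ :=
    exists_integral_signedRpow_const_add_pos hL (by linarith) (by linarith) h_moment
  generalize hI_def : ∫ ω, signedRpow (1 - α) (t + L ω) ∂P = I at hI
  set c := (α * I / t ^ (1 - α)) ^ α⁻¹
  have hc : 0 < c := by positivity
  have hcα : c ^ α = α * I / t ^ (1 - α) := rpow_inv_rpow (by positivity) hα₀.ne'
  have hϱ : 0 < c / t := div_pos hc ht
  refine ⟨c, hc, c / t, hϱ, ?_⟩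
  have h_factor : ∀ ω, c + c / t * L ω = c / t * (t + L ω) := fun ω => by field_simp
  calc c = c ^ (1 - α) * c ^ α := by rw [← rpow_add hc]; norm_num
    _ = α * ((c / t) ^ (1 - α) * I) := by rw [hcα, div_rpow hc.le ht.le]; field_simp
    _ = α * ∫ ω, signedRpow (1 - α) (c + c / t * L ω) ∂P := by
        simp_rw [h_factor, signedRpow_mul_of_pos hϱ, integral_const_mul, hI_def]
end

section
/- Let K > 1, d ≥ 1, α ∈ (0,2). Suppose A, B are invertible d×d real matrices with K^{-1}I ≤ AA* ≤ KI, K^{-1}I ≤ BB* ≤ KI, and ‖A - B‖ ≤ ε. Then there exists a constant C = C(K,d,α) such that for all y ∈ ℝ^d \ {0}: | |det(A^{-1})|/|A^{-1}y|^{d+α} - |det(B^{-1})|/|B^{-1}y|^{d+α} | ≤ C·ε/|y|^{d+α}. -/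
/-!
The ellipticity bounds give `‖A‖ ≤ √K` and `‖A⁻¹‖ ≤ √K` in the `ℓ²` operator norm. Hence `A⁻¹`
and `B⁻¹` lie in a fixed closed ball, on which the polynomial `det` is bounded and Lipschitz, and
`‖A⁻¹ - B⁻¹‖ = ‖A⁻¹ (B - A) B⁻¹‖ ≤ K ε`. Moreover `|A⁻¹ y|, |B⁻¹ y| ≥ |y| / √K`, and on
`[|y| / √K, ∞)` the map `t ↦ t ^ (-(d + α))` is Lipschitz with constant `≲ |y| ^ (-(d + α) - 1)`.
Splitting the difference of the two kernels into the change of the numerator and the change of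
the denominator gives the bound, homogeneous of degree `-(d + α)` in `y`.
-/

open Matrix Real WithLp Metric
open scoped Matrix.Norms.L2Operator

namespace Matrix

variable {n : Type*} [Fintype n]

lemma sqrt_sum_sq_eq_norm_toLp (v : n → ℝ) : √(∑ i, v i ^ 2) = ‖toLp 2 v‖ := by
  simp [EuclideanSpace.norm_eq]

lemma norm_toLp_sq (v : n → ℝ) : ‖toLp 2 v‖ ^ 2 = v ⬝ᵥ v := by
  rw [EuclideanSpace.norm_sq_eq]
  simp [dotProduct, sq]

lemma norm_toLp_transpose_mulVec_sq (A : Matrix n n ℝ) (x : n → ℝ) :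
    ‖toLp 2 (Aᵀ *ᵥ x)‖ ^ 2 = x ⬝ᵥ (A * Aᵀ) *ᵥ x := by
  rw [norm_toLp_sq, ← mulVec_mulVec, dotProduct_mulVec x A, ← mulVec_transpose]

variable [DecidableEq n]

lemma PosSemidef.dotProduct_mulVec_le_of_smul_one_sub {M : Matrix n n ℝ} {c : ℝ}
    (h : (c • 1 - M).PosSemidef) (x : n → ℝ) : x ⬝ᵥ M *ᵥ x ≤ c * (x ⬝ᵥ x) := by
  have hx := h.dotProduct_mulVec_nonneg x
  simp only [star_trivial, sub_mulVec, dotProduct_sub, smul_mulVec, one_mulVec,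
    dotProduct_smul, smul_eq_mul] at hx
  linarith

lemma PosSemidef.le_dotProduct_mulVec_of_sub_smul_one {M : Matrix n n ℝ} {c : ℝ}
    (h : (M - c • 1).PosSemidef) (x : n → ℝ) : c * (x ⬝ᵥ x) ≤ x ⬝ᵥ M *ᵥ x := by
  have hx := h.dotProduct_mulVec_nonneg x
  simp only [star_trivial, sub_mulVec, dotProduct_sub, smul_mulVec, one_mulVec,
    dotProduct_smul, smul_eq_mul] at hx
  linarith

lemma norm_toLp_mulVec_le (A : Matrix n n ℝ) (x : n → ℝ) :
    ‖toLp 2 (A *ᵥ x)‖ ≤ ‖A‖ * ‖toLp 2 x‖ :=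
  (toEuclideanCLM (𝕜 := ℝ) A).le_opNorm (toLp 2 x)

lemma l2_opNorm_le_of_mulVec_le {A : Matrix n n ℝ} {c : ℝ} (hc : 0 ≤ c)
    (h : ∀ x, ‖toLp 2 (A *ᵥ x)‖ ≤ c * ‖toLp 2 x‖) : ‖A‖ ≤ c :=
  (toEuclideanCLM (𝕜 := ℝ) A).opNorm_le_bound hc fun x => h (ofLp x)

lemma l2_opNorm_transpose (A : Matrix n n ℝ) : ‖Aᵀ‖ = ‖A‖ := by
  rw [← conjTranspose_eq_transpose_of_trivial, l2_opNorm_conjTranspose]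

lemma l2_opNorm_le_sqrt_of_posSemidef {A : Matrix n n ℝ} {c : ℝ} (hc : 0 ≤ c)
    (h : (c • 1 - A * Aᵀ).PosSemidef) : ‖A‖ ≤ √c := by
  rw [← l2_opNorm_transpose]
  refine l2_opNorm_le_of_mulVec_le (sqrt_nonneg c) fun x => ?_
  refine abs_le_of_sq_le_sq' ?_ (by positivity) |>.2
  rw [mul_pow, sq_sqrt hc, norm_toLp_transpose_mulVec_sq, norm_toLp_sq]
  exact h.dotProduct_mulVec_le_of_smul_one_sub x

lemma l2_opNorm_inv_le_sqrt_of_posSemidef {A : Matrix n n ℝ} {c : ℝ} (hc : 0 < c)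
    (hA : IsUnit A.det) (h : (A * Aᵀ - c⁻¹ • 1).PosSemidef) : ‖A⁻¹‖ ≤ √c := by
  rw [← l2_opNorm_transpose, transpose_nonsing_inv]
  refine l2_opNorm_le_of_mulVec_le (sqrt_nonneg c) fun x => ?_
  have hAx : Aᵀ *ᵥ (Aᵀ⁻¹ *ᵥ x) = x := by
    rw [mulVec_mulVec, mul_nonsing_inv _ (by rwa [det_transpose]), one_mulVec]
  have hq := h.le_dotProduct_mulVec_of_sub_smul_one (Aᵀ⁻¹ *ᵥ x)
  rw [← norm_toLp_sq, ← norm_toLp_transpose_mulVec_sq, hAx, inv_mul_le_iff₀ hc] at hq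
  refine abs_le_of_sq_le_sq' ?_ (by positivity) |>.2
  rwa [mul_pow, sq_sqrt hc.le]

lemma norm_toLp_div_le_norm_toLp_inv_mulVec {M : Matrix n n ℝ} {c : ℝ} (hM : IsUnit M.det)
    (hc : 0 < c) (hMc : ‖M‖ ≤ c) (y : n → ℝ) : ‖toLp 2 y‖ / c ≤ ‖toLp 2 (M⁻¹ *ᵥ y)‖ := by
  rw [div_le_iff₀' hc]
  calc ‖toLp 2 y‖ = ‖toLp 2 (M *ᵥ (M⁻¹ *ᵥ y))‖ := by
        rw [mulVec_mulVec, mul_nonsing_inv _ hM, one_mulVec]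
    _ ≤ ‖M‖ * ‖toLp 2 (M⁻¹ *ᵥ y)‖ := norm_toLp_mulVec_le _ _
    _ ≤ c * ‖toLp 2 (M⁻¹ *ᵥ y)‖ := by gcongr

lemma l2_opNorm_inv_sub_inv_le {A B : Matrix n n ℝ} (hA : IsUnit A.det) (hB : IsUnit B.det) :
    ‖A⁻¹ - B⁻¹‖ ≤ ‖A⁻¹‖ * ‖A - B‖ * ‖B⁻¹‖ := by
  rw [inv_sub_inv (iff_of_true ((isUnit_iff_isUnit_det A).2 hA) ((isUnit_iff_isUnit_det B).2 hB)),
    norm_sub_rev A B]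
  exact (l2_opNorm_mul _ _).trans (by gcongr; exact l2_opNorm_mul _ _)

lemma abs_norm_toLp_mulVec_sub_le (M N : Matrix n n ℝ) (y : n → ℝ) :
    |‖toLp 2 (M *ᵥ y)‖ - ‖toLp 2 (N *ᵥ y)‖| ≤ ‖M - N‖ * ‖toLp 2 y‖ := by
  refine (abs_norm_sub_norm_le _ _).trans ?_
  rw [← toLp_sub, ← sub_mulVec]
  exact norm_toLp_mulVec_le _ _

lemma contDiff_det {k : WithTop ℕ∞} : ContDiff ℝ k (det : Matrix n n ℝ → ℝ) := by
  have hentry : ∀ i j, ContDiff ℝ k fun M : Matrix n n ℝ => M i j := fun i j =>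
    (LinearMap.toContinuousLinearMap (entryLinearMap ℝ ℝ i j)).contDiff
  simp_rw [funext det_apply]
  exact ContDiff.sum fun σ _ => (contDiff_prod fun i _ => hentry _ _).const_smul _

lemma exists_lipschitzOnWith_det (r : ℝ) :
    ∃ L, LipschitzOnWith L (det : Matrix n n ℝ → ℝ) (closedBall 0 r) :=
  contDiff_det.locallyLipschitz.locallyLipschitzOn.exists_lipschitzOnWith_of_compact
    (isCompact_closedBall 0 r)

lemma exists_abs_det_le (r : ℝ) : ∃ D, ∀ M ∈ closedBall (0 : Matrix n n ℝ) r, |M.det| ≤ D :=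
  (isCompact_closedBall 0 r).exists_bound_of_continuousOn
    (contDiff_det (k := 0)).continuous.continuousOn

end Matrix

lemma abs_rpow_neg_sub_rpow_neg_le {p m a b : ℝ} (hp : 0 ≤ p) (hm : 0 < m) (ha : m ≤ a)
    (hb : m ≤ b) : |a ^ (-p) - b ^ (-p)| ≤ p * m ^ (-p - 1) * |a - b| := by
  have hderiv : ∀ t ∈ Set.Ici m,
      HasDerivWithinAt (fun t => t ^ (-p)) (-p * t ^ (-p - 1)) (Set.Ici m) t :=
    fun t ht => (hasDerivAt_rpow_const (Or.inl (hm.trans_le ht).ne')).hasDerivWithinAt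
  have hbound : ∀ t ∈ Set.Ici m, ‖-p * t ^ (-p - 1)‖ ≤ p * m ^ (-p - 1) := by
    intro t ht
    rw [norm_mul, norm_neg, norm_of_nonneg hp, norm_of_nonneg (rpow_nonneg (hm.le.trans ht) _)]
    exact mul_le_mul_of_nonneg_left (rpow_le_rpow_of_nonpos hm ht (by linarith)) hp
  simpa only [Real.norm_eq_abs] using
    (convex_Ici m).norm_image_sub_le_of_norm_hasDerivWithin_le hderiv hbound hb ha

lemma abs_div_rpow_sub_div_rpow_le {p s u a b x y δ D : ℝ} (hp : 0 ≤ p) (hs : 0 < s)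
    (hu : 0 < u) (ha : u / s ≤ a) (hb : u / s ≤ b) (hab : |a - b| ≤ δ * u) (hy : |y| ≤ D) :
    |x / a ^ p - y / b ^ p| ≤ (|x - y| * s ^ p + D * p * s ^ (p + 1) * δ) / u ^ p := by
  have hm : 0 < u / s := div_pos hu hs
  have ha0 : 0 < a := hm.trans_le ha
  have hsplit : x / a ^ p - y / b ^ p = (x - y) * a ^ (-p) + y * (a ^ (-p) - b ^ (-p)) := by
    rw [rpow_neg ha0.le, rpow_neg (hm.le.trans hb)]; ring
  have hnumerator : |(x - y) * a ^ (-p)| ≤ |x - y| * s ^ p / u ^ p := by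
    rw [abs_mul, abs_of_pos (rpow_pos_of_pos ha0 _), mul_div_assoc]
    refine mul_le_mul_of_nonneg_left ?_ (abs_nonneg _)
    calc a ^ (-p) ≤ (u / s) ^ (-p) := rpow_le_rpow_of_nonpos hm ha (by linarith)
      _ = s ^ p / u ^ p := by rw [rpow_neg hm.le, div_rpow hu.le hs.le, inv_div]
  have hdenominator : |y * (a ^ (-p) - b ^ (-p))| ≤ D * p * s ^ (p + 1) * δ / u ^ p := by
    have hδ : 0 ≤ δ * u := (abs_nonneg _).trans hab
    calc |y * (a ^ (-p) - b ^ (-p))| ≤ D * (p * (u / s) ^ (-p - 1) * (δ * u)) := by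
          rw [abs_mul]
          refine mul_le_mul hy ?_ (abs_nonneg _) ((abs_nonneg _).trans hy)
          exact (abs_rpow_neg_sub_rpow_neg_le hp hm ha hb).trans
            (mul_le_mul_of_nonneg_left hab (by positivity))
      _ = D * p * s ^ (p + 1) * δ / u ^ p := by
          rw [show -p - 1 = -(p + 1) by ring, rpow_neg hm.le, div_rpow hu.le hs.le, inv_div,
            rpow_add_one hu.ne']
          field_simp
  calc |x / a ^ p - y / b ^ p| ≤ |(x - y) * a ^ (-p)| + |y * (a ^ (-p) - b ^ (-p))| := by
        rw [hsplit]; exact abs_add_le _ _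
    _ ≤ _ := by rw [add_div]; exact add_le_add hnumerator hdenominator

theorem stmt12_general (K : ℝ) (hK : 1 < K) (d : ℕ) (α : ℝ)
    (hα : α ∈ Set.Ioo (0:ℝ) 2) :
    ∃ C > (0:ℝ), ∀ (A B : Matrix (Fin d) (Fin d) ℝ) (ε : ℝ),
      IsUnit A.det → IsUnit B.det →
      (A * Aᵀ - K⁻¹ • (1 : Matrix (Fin d) (Fin d) ℝ)).PosSemidef →
      (K • (1 : Matrix (Fin d) (Fin d) ℝ) - A * Aᵀ).PosSemidef →
      (B * Bᵀ - K⁻¹ • (1 : Matrix (Fin d) (Fin d) ℝ)).PosSemidef →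
      (K • (1 : Matrix (Fin d) (Fin d) ℝ) - B * Bᵀ).PosSemidef →
      (∀ y : Fin d → ℝ,
        Real.sqrt (∑ i, ((A - B).mulVec y i) ^ 2) ≤ ε * Real.sqrt (∑ i, (y i) ^ 2)) →
      ∀ y : Fin d → ℝ, y ≠ 0 →
        |(|A⁻¹.det| / Real.sqrt (∑ i, (A⁻¹.mulVec y i) ^ 2) ^ ((d : ℝ) + α))
            - |B⁻¹.det| / Real.sqrt (∑ i, (B⁻¹.mulVec y i) ^ 2) ^ ((d : ℝ) + α)|
          ≤ C * ε / Real.sqrt (∑ i, (y i) ^ 2) ^ ((d : ℝ) + α) := by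
  have hK₀ : 0 < K := by linarith
  have hs : 0 < √K := sqrt_pos.2 hK₀
  set p : ℝ := (d : ℝ) + α
  have hp : 0 ≤ p := by have := hα.1; positivity
  obtain ⟨L, hL⟩ := exists_lipschitzOnWith_det (n := Fin d) √K
  obtain ⟨D, hD⟩ := exists_abs_det_le (n := Fin d) √K
  refine ⟨L * K * √K ^ p + |D| * p * √K ^ (p + 1) * K + 1, by positivity, ?_⟩
  intro A B ε hA hB hA₁ hA₂ hB₁ hB₂ hAB y hy
  simp only [sqrt_sum_sq_eq_norm_toLp] at hAB ⊢
  have hAinv : ‖A⁻¹‖ ≤ √K := l2_opNorm_inv_le_sqrt_of_posSemidef hK₀ hA hA₁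
  have hBinv : ‖B⁻¹‖ ≤ √K := l2_opNorm_inv_le_sqrt_of_posSemidef hK₀ hB hB₁
  have hy₀ : 0 < ‖toLp 2 y‖ := by simpa using hy
  have hε : 0 ≤ ε := nonneg_of_mul_nonneg_left ((norm_nonneg _).trans (hAB y)) hy₀
  have hinv : ‖A⁻¹ - B⁻¹‖ ≤ K * ε := by
    calc ‖A⁻¹ - B⁻¹‖ ≤ √K * ε * √K := (l2_opNorm_inv_sub_inv_le hA hB).trans
          (by gcongr; exact l2_opNorm_le_of_mulVec_le hε hAB)
      _ = K * ε := by rw [mul_right_comm, mul_self_sqrt hK₀.le]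
  have hdet : |(|A⁻¹.det| - |B⁻¹.det|)| ≤ L * (K * ε) := by
    have := hL.dist_le_mul _ (mem_closedBall_zero_iff.2 hAinv) _ (mem_closedBall_zero_iff.2 hBinv)
    rw [Real.dist_eq, dist_eq_norm] at this
    exact (abs_abs_sub_abs_le_abs_sub _ _).trans (this.trans (by gcongr))
  calc _ ≤ (|(|A⁻¹.det| - |B⁻¹.det|)| * √K ^ p + |D| * p * √K ^ (p + 1) * (K * ε))
        / ‖toLp 2 y‖ ^ p :=
        abs_div_rpow_sub_div_rpow_le hp hs hy₀
          (norm_toLp_div_le_norm_toLp_inv_mulVec hA hs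
            (l2_opNorm_le_sqrt_of_posSemidef hK₀.le hA₂) y)
          (norm_toLp_div_le_norm_toLp_inv_mulVec hB hs
            (l2_opNorm_le_sqrt_of_posSemidef hK₀.le hB₂) y)
          ((abs_norm_toLp_mulVec_sub_le _ _ y).trans (by gcongr))
          (by simpa using (hD _ (mem_closedBall_zero_iff.2 hBinv)).trans (le_abs_self D))
    _ ≤ (L * (K * ε) * √K ^ p + |D| * p * √K ^ (p + 1) * (K * ε)) / ‖toLp 2 y‖ ^ p := by
        gcongr
    _ = (L * K * √K ^ p + |D| * p * √K ^ (p + 1) * K) * ε / ‖toLp 2 y‖ ^ p := by ring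
    _ ≤ _ := by gcongr ?_ * _ / _; linarith

/-- Stability of the kernel `y ↦ |det(A⁻¹)|/|A⁻¹y|^{d+α}` under perturbation of a
uniformly elliptic matrix: for `K > 1`, `d ≥ 1`, `α ∈ (0,2)` there is `C = C(K,d,α)` such
that if `A, B` are invertible with `K⁻¹I ≤ AA* ≤ KI`, `K⁻¹I ≤ BB* ≤ KI` and
`‖A - B‖ ≤ ε` (operator norm, w.r.t. the Euclidean norm `|v| = √(∑ v_i²)`), then for all
`y ≠ 0`: `| |det A⁻¹|/|A⁻¹y|^{d+α} - |det B⁻¹|/|B⁻¹y|^{d+α} | ≤ Cε/|y|^{d+α}`. -/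
theorem stmt12 (K : ℝ) (hK : 1 < K) (d : ℕ) (hd : 1 ≤ d) (α : ℝ)
    (hα : α ∈ Set.Ioo (0:ℝ) 2) :
    ∃ C > (0:ℝ), ∀ (A B : Matrix (Fin d) (Fin d) ℝ) (ε : ℝ),
      IsUnit A.det → IsUnit B.det →
      (A * Aᵀ - K⁻¹ • (1 : Matrix (Fin d) (Fin d) ℝ)).PosSemidef →
      (K • (1 : Matrix (Fin d) (Fin d) ℝ) - A * Aᵀ).PosSemidef →
      (B * Bᵀ - K⁻¹ • (1 : Matrix (Fin d) (Fin d) ℝ)).PosSemidef →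
      (K • (1 : Matrix (Fin d) (Fin d) ℝ) - B * Bᵀ).PosSemidef →
      (∀ y : Fin d → ℝ,
        Real.sqrt (∑ i, ((A - B).mulVec y i) ^ 2) ≤ ε * Real.sqrt (∑ i, (y i) ^ 2)) →
      ∀ y : Fin d → ℝ, y ≠ 0 →
        |(|A⁻¹.det| / Real.sqrt (∑ i, (A⁻¹.mulVec y i) ^ 2) ^ ((d : ℝ) + α))
            - |B⁻¹.det| / Real.sqrt (∑ i, (B⁻¹.mulVec y i) ^ 2) ^ ((d : ℝ) + α)|
          ≤ C * ε / Real.sqrt (∑ i, (y i) ^ 2) ^ ((d : ℝ) + α) :=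
  stmt12_general K hK d α hα
end
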